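/- arXiv:1712.08836 — 5 statements merged into one kernel-verified Lean document; each statement's English description precedes it below -/
import Mathlib

section
/- If γ > 1, λ ∈ (0, 1/2), and u ∈ [λ, 1−λ], then u^γ + (1−u)^γ ≤ 1 − 2λ(1 − 2^{1−γ}). -/
/-!
The function `f u = u ^ γ + (1 - u) ^ γ` is convex on `[0, 1]` and symmetric about `1/2`, so on
`[λ, 1 - λ]` it is largest at the endpoint `λ`. Writing `λ = (1 - 2λ) • 0 + 2λ • (1/2)`,
convexity gives `f λ ≤ (1 - 2λ) f 0 + 2λ f (1/2) = 1 - 2λ + 2λ 2 ^ (1 - γ)`.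
-/

open Real Set

lemma convexOn_one_sub_rpow {γ : ℝ} (hγ : 1 ≤ γ) :
    ConvexOn ℝ (Iic 1) fun u : ℝ => (1 - u) ^ γ := by
  refine ⟨convex_Iic 1, fun x hx y hy a b ha hb hab => ?_⟩
  have h := (convexOn_rpow hγ).2 (mem_Ici.2 (sub_nonneg.2 hx)) (mem_Ici.2 (sub_nonneg.2 hy))
    ha hb hab
  simp only [smul_eq_mul] at h ⊢
  convert h using 2
  linear_combination -hab

lemma convexOn_rpow_add_one_sub_rpow {γ : ℝ} (hγ : 1 ≤ γ) :
    ConvexOn ℝ (Icc 0 1) fun u : ℝ => u ^ γ + (1 - u) ^ γ :=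
  ((convexOn_rpow hγ).subset Icc_subset_Ici_self (convex_Icc 0 1)).add
    ((convexOn_one_sub_rpow hγ).subset Icc_subset_Iic_self (convex_Icc 0 1))

lemma half_rpow_add_one_sub_half_rpow (γ : ℝ) :
    (1 / 2 : ℝ) ^ γ + (1 - 1 / 2) ^ γ = 2 ^ (1 - γ) := by
  rw [show (1 - 1 / 2 : ℝ) = 1 / 2 by norm_num, rpow_sub two_pos, rpow_one,
    div_rpow zero_le_one zero_le_two, one_rpow]
  ring

theorem stmt0 (γ lam u : ℝ) (hγ : 1 < γ) (hlam : lam ∈ Set.Ioo (0:ℝ) (1/2))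
    (hu : u ∈ Set.Icc lam (1 - lam)) :
    u ^ γ + (1 - u) ^ γ ≤ 1 - 2 * lam * (1 - 2 ^ (1 - γ)) := by
  obtain ⟨hlam₀, hlam₁⟩ := hlam
  set f : ℝ → ℝ := fun u => u ^ γ + (1 - u) ^ γ
  have hf : ConvexOn ℝ (Icc 0 1) f := convexOn_rpow_add_one_sub_rpow hγ.le
  have hsymm : f (1 - lam) = f lam := by simp only [f, sub_sub_cancel, add_comm]
  have hu_le : f u ≤ f lam := by
    have := hf.le_on_segment (x := lam) (y := 1 - lam) ⟨hlam₀.le, by linarith⟩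
      ⟨by linarith, by linarith⟩ (by rwa [segment_eq_Icc (by linarith)])
    rwa [hsymm, max_self] at this
  have hlam_le : f lam ≤ (1 - 2 * lam) * f 0 + 2 * lam * f (1 / 2) := by
    have := hf.2 (x := 0) (y := 1 / 2) ⟨le_rfl, zero_le_one⟩ ⟨by norm_num, by norm_num⟩
      (by linarith : 0 ≤ 1 - 2 * lam) (by linarith : 0 ≤ 2 * lam) (by ring)
    simp only [smul_eq_mul] at this
    rwa [show (1 - 2 * lam) * 0 + 2 * lam * (1 / 2) = lam by ring] at this
  have hf₀ : f 0 = 1 := by simp [f, zero_rpow (by linarith : γ ≠ 0)]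
  have hf_half : f (1 / 2) = 2 ^ (1 - γ) := half_rpow_add_one_sub_half_rpow γ
  rw [hf₀, hf_half] at hlam_le
  linarith
end

section
/- For any complex numbers u, v and any γ with 0 < γ ≤ 1, one has |u^⟨γ⟩ − v^⟨γ⟩| ≤ 2^{1−γ} |u − v|^γ. -/
/-!
Write `u = r z`, `v = s w` with `‖z‖ = ‖w‖ = 1`, so that `u^⟨γ⟩ = r^γ z̄` and `v^⟨γ⟩ = s^γ w̄`.
For unit vectors `‖a x - b y‖² = (a - b)² + a b ‖x - y‖²`, so with `q = ‖z - w‖² ∈ [0, 4]` the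
squared inequality reads `(r^γ - s^γ)² + r^γ s^γ q ≤ 4^(1-γ) ((r - s)² + r s q)^γ`. At `q = 0` this
is the Hölder bound `|r^γ - s^γ| ≤ |r - s|^γ`, at `q = 4` the power-mean bound
`r^γ + s^γ ≤ 2^(1-γ) (r + s)^γ`, and concavity of `x ↦ x^γ` interpolates between the two.
-/

/-- `z^⟨γ⟩ = conj z * |z|^(γ-1)`. -/
noncomputable def anglePow (z : ℂ) (γ : ℝ) : ℂ :=
  (starRingEnd ℂ) z * ((‖z‖ ^ (γ - 1) : ℝ) : ℂ)

namespace Real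

variable {r s p : ℝ}

lemma abs_rpow_sub_rpow_le (hr : 0 ≤ r) (hs : 0 ≤ s) (hp₀ : 0 ≤ p) (hp₁ : p ≤ 1) :
    |r ^ p - s ^ p| ≤ |r - s| ^ p := by
  wlog hsr : s ≤ r generalizing r s
  · rw [abs_sub_comm, abs_sub_comm r]
    exact this hs hr (le_of_not_ge hsr)
  have hsub : r ^ p ≤ (r - s) ^ p + s ^ p := by
    simpa using rpow_add_le_add_rpow (sub_nonneg.2 hsr) hs hp₀ hp₁
  rw [abs_of_nonneg (sub_nonneg.2 (rpow_le_rpow hs hsr hp₀)), abs_of_nonneg (sub_nonneg.2 hsr)]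
  linarith

lemma rpow_add_rpow_le_mul_add_rpow (hr : 0 ≤ r) (hs : 0 ≤ s) (hp₀ : 0 ≤ p) (hp₁ : p ≤ 1) :
    r ^ p + s ^ p ≤ 2 ^ (1 - p) * (r + s) ^ p := by
  have hmid := (concaveOn_rpow hp₀ hp₁).2 hr hs (by norm_num : (0 : ℝ) ≤ 1 / 2)
    (by norm_num : (0 : ℝ) ≤ 1 / 2) (by norm_num)
  simp only [smul_eq_mul] at hmid
  rw [show 1 / 2 * r + 1 / 2 * s = (r + s) / 2 by ring, div_rpow (by positivity) zero_le_two]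
    at hmid
  calc r ^ p + s ^ p ≤ 2 * ((r + s) ^ p / 2 ^ p) := by linarith
    _ = 2 ^ (1 - p) * (r + s) ^ p := by
      rw [rpow_sub two_pos, rpow_one]; ring

lemma convex_comb_sq_le_of_le_mul_rpow {a b x y C t : ℝ} (hp₀ : 0 ≤ p) (hp₁ : p ≤ 1)
    (ha : 0 ≤ a) (hb : 0 ≤ b) (hx : 0 ≤ x) (hy : 0 ≤ y)
    (hax : a ≤ C * x ^ p) (hby : b ≤ C * y ^ p) (ht₀ : 0 ≤ t) (ht₁ : t ≤ 1) :
    (1 - t) * a ^ 2 + t * b ^ 2 ≤ C ^ 2 * ((1 - t) * x ^ 2 + t * y ^ 2) ^ p := by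
  have h1t : 0 ≤ 1 - t := by linarith
  calc (1 - t) * a ^ 2 + t * b ^ 2 ≤ (1 - t) * (C * x ^ p) ^ 2 + t * (C * y ^ p) ^ 2 := by
        gcongr
    _ = C ^ 2 * ((1 - t) * (x ^ 2) ^ p + t * (y ^ 2) ^ p) := by
        rw [mul_pow, mul_pow, rpow_pow_comm hx, rpow_pow_comm hy]; ring
    _ ≤ C ^ 2 * ((1 - t) * x ^ 2 + t * y ^ 2) ^ p := by
        gcongr
        exact (concaveOn_rpow hp₀ hp₁).2 (sq_nonneg x) (sq_nonneg y) h1t ht₀ (by ring)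

lemma sq_rpow_sub_add_mul_le (hr : 0 ≤ r) (hs : 0 ≤ s) (hp₀ : 0 ≤ p) (hp₁ : p ≤ 1)
    {q : ℝ} (hq₀ : 0 ≤ q) (hq₄ : q ≤ 4) :
    (r ^ p - s ^ p) ^ 2 + r ^ p * s ^ p * q
      ≤ (2 ^ (1 - p)) ^ 2 * ((r - s) ^ 2 + r * s * q) ^ p := by
  have hdiff : |r ^ p - s ^ p| ≤ 2 ^ (1 - p) * |r - s| ^ p :=
    (abs_rpow_sub_rpow_le hr hs hp₀ hp₁).trans <|
      le_mul_of_one_le_left (by positivity) (one_le_rpow one_le_two (by linarith))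
  have h := convex_comb_sq_le_of_le_mul_rpow hp₀ hp₁ (abs_nonneg _) (by positivity) (abs_nonneg _)
    (by positivity) hdiff (rpow_add_rpow_le_mul_add_rpow hr hs hp₀ hp₁)
    (by positivity : 0 ≤ q / 4) (by linarith)
  rw [sq_abs, sq_abs, show (1 - q / 4) * (r - s) ^ 2 + q / 4 * (r + s) ^ 2 = (r - s) ^ 2 + r * s * q
    by ring] at h
  linear_combination h

end Real

lemma norm_smul_sub_smul_sq {E : Type*} [NormedAddCommGroup E] [InnerProductSpace ℝ E]
    {x y : E} (hx : ‖x‖ = 1) (hy : ‖y‖ = 1) (a b : ℝ) :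
    ‖a • x - b • y‖ ^ 2 = (a - b) ^ 2 + a * b * ‖x - y‖ ^ 2 := by
  rw [norm_sub_sq_real, norm_sub_sq_real, norm_smul, norm_smul, real_inner_smul_left,
    real_inner_smul_right, hx, hy, Real.norm_eq_abs, Real.norm_eq_abs, mul_one, mul_one,
    sq_abs, sq_abs]
  ring

lemma Complex.exists_norm_eq_one_and_eq_norm_smul (u : ℂ) : ∃ z : ℂ, ‖z‖ = 1 ∧ u = ‖u‖ • z :=
  ⟨_, norm_exp_ofReal_mul_I u.arg, by rw [real_smul, norm_mul_exp_arg_mul_I]⟩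

lemma anglePow_smul {r γ : ℝ} (hr : 0 ≤ r) (hγ : 0 < γ) {z : ℂ} (hz : ‖z‖ = 1) :
    anglePow (r • z) γ = r ^ γ • (starRingEnd ℂ) z := by
  rcases hr.eq_or_lt with rfl | hr
  · simp [anglePow, Real.zero_rpow hγ.ne']
  rw [anglePow, norm_smul, hz, mul_one, Real.norm_of_nonneg hr.le, Complex.real_smul,
    Complex.real_smul, map_mul, Complex.conj_ofReal, Real.rpow_sub_one hr.ne']
  have hr' : (r : ℂ) ≠ 0 := by exact_mod_cast hr.ne'
  push_cast
  field_simp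

theorem stmt3 (u v : ℂ) (γ : ℝ) (hγ0 : 0 < γ) (hγ1 : γ ≤ 1) :
    ‖anglePow u γ - anglePow v γ‖ ≤ 2 ^ (1 - γ) * ‖u - v‖ ^ γ := by
  obtain ⟨z, hz, hu⟩ := u.exists_norm_eq_one_and_eq_norm_smul
  obtain ⟨w, hw, hv⟩ := v.exists_norm_eq_one_and_eq_norm_smul
  have hconj : ‖(starRingEnd ℂ) z - (starRingEnd ℂ) w‖ = ‖z - w‖ := by
    rw [← map_sub, Complex.norm_conj]
  have hzw : ‖z - w‖ ^ 2 ≤ 2 ^ 2 := by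
    gcongr
    exact (norm_sub_le z w).trans_eq (by rw [hz, hw]; norm_num)
  rw [hu, hv, anglePow_smul (norm_nonneg u) hγ0 hz, anglePow_smul (norm_nonneg v) hγ0 hw,
    ← pow_le_pow_iff_left₀ (norm_nonneg _) (by positivity) two_ne_zero,
    norm_smul_sub_smul_sq (Complex.norm_conj z ▸ hz) (Complex.norm_conj w ▸ hw), hconj,
    mul_pow, Real.rpow_pow_comm (norm_nonneg _), norm_smul_sub_smul_sq hz hw]
  exact Real.sq_rpow_sub_add_mul_le (norm_nonneg u) (norm_nonneg v) hγ0.le hγ1 (sq_nonneg _)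
    (hzw.trans_eq (by norm_num))
end

section
/- For any complex numbers u, v and any γ > 1, one has |u^⟨γ⟩ − v^⟨γ⟩| ≤ γ |u − v| (max(|u|, |v|))^{γ−1}. -/
/-!
Since `u^⟨γ⟩ = conj (‖u‖^(γ-1) • u)` and conjugation is an isometry, it suffices to bound
`‖‖u‖^a • u - ‖v‖^a • v‖` with `a = γ - 1`, in any real normed space. For `‖v‖ ≤ ‖u‖` write
`‖u‖^a • u - ‖v‖^a • v = ‖u‖^a • (u - v) + (‖u‖^a - ‖v‖^a) • v`; the second term is controlled by
the scalar inequality `y (x^a - y^a) ≤ a (x - y) x^a` for `0 ≤ y ≤ x`, which is the tangent-line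
(Bernoulli) bound for the convex function `t ↦ t^(1+a)`, together with `‖u‖ - ‖v‖ ≤ ‖u - v‖`.
-/

theorem Real.mul_rpow_sub_rpow_le {x y a : ℝ} (hy : 0 ≤ y) (hyx : y ≤ x) (ha : 0 ≤ a) :
    y * (x ^ a - y ^ a) ≤ a * (x - y) * x ^ a := by
  rcases hy.eq_or_lt with rfl | hy
  · simpa using mul_nonneg (mul_nonneg ha hyx) (Real.rpow_nonneg hyx a)
  have hx : 0 < x := hy.trans_le hyx
  -- Bernoulli at `y / x`, scaled by `x ^ (1 + a)`: the tangent line of `t ↦ t ^ (1 + a)` at `x`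
  have bernoulli := one_add_mul_self_le_rpow_one_add (s := y / x - 1) (p := 1 + a)
    (by linarith [div_pos hy hx]) (by linarith)
  rw [add_sub_cancel, Real.div_rpow hy.le hx.le, Real.rpow_one_add' hx.le (by linarith),
    Real.rpow_one_add' hy.le (by linarith), le_div_iff₀ (by positivity)] at bernoulli
  have expand : (1 + (1 + a) * (y / x - 1)) * (x * x ^ a) =
      x * x ^ a + (1 + a) * (y - x) * x ^ a := by
    field_simp
  linarith

section

variable {E : Type*} [SeminormedAddCommGroup E] [NormedSpace ℝ E] {a : ℝ}

theorem norm_rpow_smul_sub_rpow_smul_le_of_norm_le {u v : E} (ha : 0 ≤ a) (h : ‖v‖ ≤ ‖u‖) :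
    ‖‖u‖ ^ a • u - ‖v‖ ^ a • v‖ ≤ (1 + a) * ‖u - v‖ * ‖u‖ ^ a := by
  have hpow : ‖v‖ ^ a ≤ ‖u‖ ^ a := Real.rpow_le_rpow (norm_nonneg v) h ha
  have hsplit : ‖u‖ ^ a • u - ‖v‖ ^ a • v = ‖u‖ ^ a • (u - v) + (‖u‖ ^ a - ‖v‖ ^ a) • v := by
    rw [smul_sub, sub_smul]; abel
  calc ‖‖u‖ ^ a • u - ‖v‖ ^ a • v‖
      ≤ ‖u‖ ^ a * ‖u - v‖ + (‖u‖ ^ a - ‖v‖ ^ a) * ‖v‖ := by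
        rw [hsplit]
        refine (norm_add_le _ _).trans_eq ?_
        rw [norm_smul, norm_smul, Real.norm_of_nonneg (by positivity),
          Real.norm_of_nonneg (sub_nonneg.2 hpow)]
    _ ≤ ‖u‖ ^ a * ‖u - v‖ + a * (‖u‖ - ‖v‖) * ‖u‖ ^ a := by
        grw [mul_comm _ ‖v‖, Real.mul_rpow_sub_rpow_le (norm_nonneg v) h ha]
    _ ≤ (1 + a) * ‖u - v‖ * ‖u‖ ^ a := by
        have := mul_le_mul_of_nonneg_right (mul_le_mul_of_nonneg_left (norm_sub_norm_le u v) ha)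
          (Real.rpow_nonneg (norm_nonneg u) a)
        linarith

theorem norm_rpow_smul_sub_rpow_smul_le (u v : E) (ha : 0 ≤ a) :
    ‖‖u‖ ^ a • u - ‖v‖ ^ a • v‖ ≤ (1 + a) * ‖u - v‖ * max ‖u‖ ‖v‖ ^ a := by
  rcases le_total ‖v‖ ‖u‖ with h | h
  · simpa [max_eq_left h] using norm_rpow_smul_sub_rpow_smul_le_of_norm_le ha h
  · simpa [max_eq_right h, norm_sub_rev] using norm_rpow_smul_sub_rpow_smul_le_of_norm_le ha h

end

theorem anglePow_eq_conj_rpow_smul (z : ℂ) (γ : ℝ) :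
    anglePow z γ = starRingEnd ℂ (‖z‖ ^ (γ - 1) • z) := by
  rw [anglePow, Complex.real_smul, map_mul, Complex.conj_ofReal, mul_comm]

theorem stmt4 (u v : ℂ) (γ : ℝ) (hγ : 1 < γ) :
    ‖anglePow u γ - anglePow v γ‖ ≤
      γ * ‖u - v‖ * max ‖u‖ ‖v‖ ^ (γ - 1) := by
  rw [anglePow_eq_conj_rpow_smul, anglePow_eq_conj_rpow_smul, ← map_sub, Complex.norm_conj]
  simpa using norm_rpow_smul_sub_rpow_smul_le u v (sub_nonneg.2 hγ.le)
end

section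
/- For 0 ≤ r ≤ 1, λ ∈ [−1, 1], and γ > 1, the inequality r^{2γ} − 2r^γ λ + 1 ≤ γ² (r² − 2rλ + 1) holds. -/
/-! Put `a = r ^ γ` and write `x ^ 2 - 2 x λ + 1 = (1 - x) ^ 2 + 2 x (1 - λ)` for `x = a` and `x = r`.
Bernoulli's inequality gives `0 ≤ 1 - a ≤ γ (1 - r)`, which bounds the square terms, and
`a ≤ r ≤ γ ^ 2 r` bounds the linear terms. -/

lemma one_sub_rpow_le_mul_one_sub {r γ : ℝ} (hr : 0 ≤ r) (hγ : 1 ≤ γ) :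
    1 - r ^ γ ≤ γ * (1 - r) := by
  have bernoulli := one_add_mul_self_le_rpow_one_add (by linarith : (-1 : ℝ) ≤ r - 1) hγ
  rw [add_sub_cancel] at bernoulli
  linarith

lemma sq_sub_two_mul_add_one_le {a r c lam : ℝ} (hlam : lam ≤ 1) (ha1 : a ≤ 1)
    (h_sq : 1 - a ≤ c * (1 - r)) (h_lin : a ≤ c ^ 2 * r) :
    a ^ 2 - 2 * a * lam + 1 ≤ c ^ 2 * (r ^ 2 - 2 * r * lam + 1) := by
  have hsq : (1 - a) ^ 2 ≤ (c * (1 - r)) ^ 2 := pow_le_pow_left₀ (by linarith) h_sq 2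
  have hlin : a * (1 - lam) ≤ c ^ 2 * r * (1 - lam) :=
    mul_le_mul_of_nonneg_right h_lin (by linarith)
  nlinarith

theorem stmt5 (r lam γ : ℝ) (hr0 : 0 ≤ r) (hr1 : r ≤ 1)
    (hlam : lam ∈ Set.Icc (-1 : ℝ) 1) (hγ : 1 < γ) :
    r ^ (2*γ) - 2 * r ^ γ * lam + 1 ≤ γ ^ 2 * (r ^ 2 - 2 * r * lam + 1) := by
  have hγ1 : 1 ≤ γ := hγ.le
  have hpow_le : r ^ γ ≤ r := Real.rpow_le_self_of_le_one hr0 hr1 hγ1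
  have hr_le : r ≤ γ ^ 2 * r := le_mul_of_one_le_left hr0 (one_le_pow₀ hγ1)
  have hsq : r ^ (2 * γ) = (r ^ γ) ^ 2 := by
    rw [mul_comm, ← Nat.cast_ofNat, Real.rpow_mul_natCast hr0]
  rw [hsq]
  exact sq_sub_two_mul_add_one_le hlam.2 (hpow_le.trans hr1)
    (one_sub_rpow_le_mul_one_sub hr0 hγ1) (hpow_le.trans hr_le)
end

section
/- Let 1 < p, q, r < ∞ with 1/p + 1/q + 1/r = 2, let k ∈ L^q(ℝ) with k(x) > 0 for all x, and let u : ℝ → (0,1) be monotone increasing with u(y) → 0 as y → −∞ and u(y) → 1 as y → +∞. Then the integral operator K̃f(x) = ∫ k(x−y) u(y) f(y) dy is bounded from L^p(ℝ) to L^{r'}(ℝ) with operator norm equal to that of the convolution with k, but no f ∈ L^p with ‖f‖_p = 1 satisfies ‖K̃f‖_{r'} = ‖K̃‖. -/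
open MeasureTheory Filter
open scoped ENNReal Topology

/-!
Young's inequality bounds both operators from `L^p` to `L^{r'}`. Since `0 < u < 1` and `k > 0`,
`|K̃ f| ≤ K (u |f|)`, and `K (u |f|) < K |f|` wherever `K |f|` is finite, which Young makes an a.e.
statement; hence `‖K̃ f‖ < ‖K |f|‖ ≤ ‖K‖` for every unit vector `f`. Conversely, `K̃` applied to the
translate `f (· - t)` is a translate of `K (u (· + t) f)`, and
`‖K ((1 - u (· + t)) f)‖ ≤ ‖(1 - u (· + t)) f‖_p ‖k‖_q → 0` as `t → ∞` by dominated convergence,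
so `‖K f‖ ≤ ‖K̃‖`. Together, `‖K̃‖ = ‖K‖` and no unit vector attains `‖K̃‖`.
-/

section Lebesgue

variable {α : Type*} [MeasurableSpace α] {μ : Measure α}

noncomputable def lpOpNorm (μ : Measure α) (p s : ℝ≥0∞) (T : (α → ℂ) → α → ℂ) : ℝ≥0∞ :=
  ⨆ (f : α → ℂ) (_ : MemLp f p μ ∧ eLpNorm f p μ = 1), eLpNorm (T f) s μ

theorem eLpNorm_le_lpOpNorm {p s : ℝ≥0∞} {T : (α → ℂ) → α → ℂ} {f : α → ℂ} (hf : MemLp f p μ)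
    (hf1 : eLpNorm f p μ = 1) : eLpNorm (T f) s μ ≤ lpOpNorm μ p s T :=
  le_iSup₂_of_le f ⟨hf, hf1⟩ le_rfl

theorem eLpNorm_ofReal_eq_lintegral (f : α → ℝ≥0∞) {p : ℝ} (hp : 0 < p) :
    eLpNorm f (.ofReal p) μ = (∫⁻ x, f x ^ p ∂μ) ^ (1 / p) := by
  simp [eLpNorm_eq_lintegral_rpow_enorm_toReal (ENNReal.ofReal_pos.2 hp).ne' ENNReal.ofReal_ne_top,
    hp.le]

theorem ae_lt_top_of_eLpNorm_ofReal_ne_top {f : α → ℝ≥0∞} (hf : AEMeasurable f μ) {p : ℝ}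
    (hp : 0 < p) (h : eLpNorm f (.ofReal p) μ ≠ ⊤) : ∀ᵐ x ∂μ, f x < ⊤ := by
  rw [eLpNorm_ofReal_eq_lintegral _ hp, Ne, ENNReal.rpow_eq_top_iff_of_pos (by positivity)] at h
  filter_upwards [ae_lt_top' (hf.pow_const p) h] with x hx
  exact (ENNReal.rpow_lt_top_iff_of_pos hp).1 hx

theorem lintegral_mul_le_of_young_exponents {f h : α → ℝ≥0∞} (hf : AEMeasurable f μ)
    (hh : AEMeasurable h μ) {p q r : ℝ} (hp : 1 ≤ p) (hq : 1 ≤ q) (hr : 0 < r)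
    (hpqr : 1 / p + 1 / q = 1 + 1 / r) :
    ∫⁻ y, f y * h y ∂μ ≤ (∫⁻ y, f y ^ p * h y ^ q ∂μ) ^ (1 / r) *
      (∫⁻ y, f y ^ p ∂μ) ^ (1 - 1 / q) * (∫⁻ y, h y ^ q ∂μ) ^ (1 - 1 / p) := by
  have ha : 0 ≤ 1 / r := by positivity
  have hb : 0 ≤ 1 - 1 / q := by rw [one_div]; linarith [inv_le_one_of_one_le₀ hq]
  have hc : 0 ≤ 1 - 1 / p := by rw [one_div]; linarith [inv_le_one_of_one_le₀ hp]
  have hholder := ENNReal.lintegral_prod_norm_pow_le (μ := μ) Finset.univ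
    (f := ![fun y => f y ^ p * h y ^ q, fun y => f y ^ p, fun y => h y ^ q])
    (p := ![1 / r, 1 - 1 / q, 1 - 1 / p])
    (by intro i _; fin_cases i <;> simp only [Fin.zero_eta, Fin.mk_one, Fin.reduceFinMk,
      Matrix.cons_val] <;> fun_prop)
    (by simp only [Fin.sum_univ_three, Matrix.cons_val]; linarith)
    (by intro i _; fin_cases i <;> simp only [Fin.zero_eta, Fin.mk_one, Fin.reduceFinMk,
      Matrix.cons_val] <;> assumption)
  simp only [Fin.prod_univ_three, Matrix.cons_val_zero, Matrix.cons_val_one, Matrix.cons_val_two,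
    Matrix.head_cons, Matrix.tail_cons] at hholder
  refine le_trans (le_of_eq (lintegral_congr fun y => ?_)) hholder
  have e1 : p * (1 / r) + p * (1 - 1 / q) = 1 := by field_simp; field_simp at hpqr; linarith
  have e2 : q * (1 / r) + q * (1 - 1 / p) = 1 := by field_simp; field_simp at hpqr; linarith
  rw [ENNReal.mul_rpow_of_nonneg _ _ ha, ← ENNReal.rpow_mul, ← ENNReal.rpow_mul,
    ← ENNReal.rpow_mul, ← ENNReal.rpow_mul, mul_assoc, mul_mul_mul_comm,
    ← ENNReal.rpow_add_of_nonneg _ _ (by positivity) (mul_nonneg (by positivity) hb),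
    ← ENNReal.rpow_add_of_nonneg _ _ (by positivity) (mul_nonneg (by positivity) hc),
    e1, e2, ENNReal.rpow_one, ENNReal.rpow_one]

theorem tendsto_eLpNorm_smul_nhds_zero {ι E : Type*} [NormedAddCommGroup E] [NormedSpace ℝ E]
    {l : Filter ι} [l.IsCountablyGenerated] {w : ι → α → ℝ} {f : α → E} {p : ℝ≥0∞} (hp : p ≠ ⊤)
    (hf : MemLp f p μ) (hw : ∀ i, AEStronglyMeasurable (w i) μ) (hw1 : ∀ i x, ‖w i x‖ ≤ 1)
    (hlim : ∀ x, Tendsto (fun i => w i x) l (𝓝 0)) :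
    Tendsto (fun i => eLpNorm (fun x => w i x • f x) p μ) l (𝓝 0) := by
  rcases eq_or_ne p 0 with rfl | hp0
  · simpa using tendsto_const_nhds
  have hp_pos : 0 < p.toReal := ENNReal.toReal_pos hp0 hp
  have hpt : ∀ x, Tendsto (fun i => ‖w i x • f x‖ₑ ^ p.toReal) l (𝓝 0) := fun x => by
    have h0 : Tendsto (fun i => ‖w i x • f x‖ₑ) l (𝓝 0) := by
      simpa using ((hlim x).smul_const (f x)).enorm
    have := ((ENNReal.continuous_rpow_const (y := p.toReal)).tendsto 0).comp h0
    rwa [ENNReal.zero_rpow_of_pos hp_pos] at this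
  have hint : Tendsto (fun i => ∫⁻ x, ‖w i x • f x‖ₑ ^ p.toReal ∂μ) l (𝓝 0) := by
    simpa using tendsto_lintegral_filter_of_dominated_convergence' (f := fun _ => 0)
      (fun x => ‖f x‖ₑ ^ p.toReal)
      (Eventually.of_forall fun i => ((hw i).smul hf.1).enorm.pow_const _)
      (Eventually.of_forall fun i => ae_of_all _ fun x => by
        rw [Pi.smul_apply', enorm_smul]
        gcongr
        exact mul_le_of_le_one_left' (by simpa [← ofReal_norm] using hw1 i x))
      (lintegral_rpow_enorm_lt_top_of_eLpNorm_lt_top hp0 hp hf.2).ne (ae_of_all _ hpt)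
  simp_rw [eLpNorm_eq_lintegral_rpow_enorm_toReal hp0 hp]
  have := ((ENNReal.continuous_rpow_const (y := 1 / p.toReal)).tendsto 0).comp hint
  rwa [ENNReal.zero_rpow_of_pos (one_div_pos.2 hp_pos)] at this

end Lebesgue

section Young

variable {G : Type*} [MeasurableSpace G] [AddCommGroup G] [MeasurableAdd₂ G] [MeasurableNeg G]
  {μ : Measure G} [SFinite μ] [μ.IsAddLeftInvariant]

theorem lintegral_lconvolution {f g : G → ℝ≥0∞} (hf : AEMeasurable f μ) (hg : AEMeasurable g μ) :
    ∫⁻ x, (f ⋆ₗ[μ] g) x ∂μ = (∫⁻ x, f x ∂μ) * ∫⁻ x, g x ∂μ := by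
  simp only [lconvolution_def]
  rw [lintegral_lintegral_swap (by fun_prop), ← lintegral_mul_const'' _ hf]
  congr 1 with y
  rw [lintegral_const_mul'' _ (by fun_prop), lintegral_add_left_eq_self g (-y)]

variable [μ.IsNegInvariant] {p q r : ℝ}

theorem lintegral_lconvolution_rpow_le {g φ : G → ℝ≥0∞} (hg : AEMeasurable g μ)
    (hφ : AEMeasurable φ μ) (hp : 1 ≤ p) (hq : 1 ≤ q) (hr : 0 < r)
    (hpqr : 1 / p + 1 / q = 1 + 1 / r) :
    ∫⁻ x, (g ⋆ₗ[μ] φ) x ^ r ∂μ ≤ (∫⁻ x, g x ^ p ∂μ) ^ (r / p) * (∫⁻ x, φ x ^ q ∂μ) ^ (r / q) := by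
  set A := ∫⁻ x, g x ^ p ∂μ
  set B := ∫⁻ x, φ x ^ q ∂μ
  set C := (A ^ (1 - 1 / q) * B ^ (1 - 1 / p)) ^ r with hC
  have hb : 0 ≤ 1 - 1 / q := by rw [one_div]; linarith [inv_le_one_of_one_le₀ hq]
  have hc : 0 ≤ 1 - 1 / p := by rw [one_div]; linarith [inv_le_one_of_one_le₀ hp]
  -- Hölder at each `x`, then Tonelli: `∫ (g ^ p ⋆ φ ^ q) = A * B`
  have hpoint : ∀ x, (g ⋆ₗ[μ] φ) x ^ r ≤ ((fun y => g y ^ p) ⋆ₗ[μ] fun y => φ y ^ q) x * C := by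
    intro x
    have hholder := lintegral_mul_le_of_young_exponents hg
      (by fun_prop : AEMeasurable (fun y => φ (-y + x)) μ) hp hq hr hpqr
    have hφx : ∫⁻ y, φ (-y + x) ^ q ∂μ = B := by
      simp_rw [neg_add_eq_sub]; exact lintegral_sub_left_eq_self (fun y => φ y ^ q) x
    rw [hφx, ← lconvolution_def, mul_assoc] at hholder
    calc (g ⋆ₗ[μ] φ) x ^ r
        ≤ ((∫⁻ y, g y ^ p * φ (-y + x) ^ q ∂μ) ^ (1 / r) *
            (A ^ (1 - 1 / q) * B ^ (1 - 1 / p))) ^ r :=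
          ENNReal.rpow_le_rpow hholder hr.le
      _ = _ := by
          rw [ENNReal.mul_rpow_of_nonneg _ _ hr.le, ← ENNReal.rpow_mul, one_div_mul_cancel hr.ne',
            ENNReal.rpow_one, lconvolution_def]
  calc ∫⁻ x, (g ⋆ₗ[μ] φ) x ^ r ∂μ
      ≤ ∫⁻ x, ((fun y => g y ^ p) ⋆ₗ[μ] fun y => φ y ^ q) x * C ∂μ := lintegral_mono hpoint
    _ = A * B * C := by
        rw [lintegral_mul_const'' _ (aemeasurable_lconvolution (by fun_prop) (by fun_prop)),
          lintegral_lconvolution (by fun_prop) (by fun_prop)]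
    _ = A ^ (r / p) * B ^ (r / q) := by
        have e1 : 1 + (1 - 1 / q) * r = r / p := by field_simp; field_simp at hpqr; linarith
        have e2 : 1 + (1 - 1 / p) * r = r / q := by field_simp; field_simp at hpqr; linarith
        rw [hC, ENNReal.mul_rpow_of_nonneg _ _ hr.le, ← ENNReal.rpow_mul, ← ENNReal.rpow_mul, ← e1,
          ← e2, ENNReal.rpow_add_of_nonneg _ _ zero_le_one (by positivity),
          ENNReal.rpow_add_of_nonneg _ _ zero_le_one (by positivity), ENNReal.rpow_one,
          ENNReal.rpow_one]
        ring

theorem eLpNorm_lconvolution_le {g φ : G → ℝ≥0∞} (hg : AEMeasurable g μ)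
    (hφ : AEMeasurable φ μ) (hp : 1 ≤ p) (hq : 1 ≤ q) (hr : 0 < r)
    (hpqr : 1 / p + 1 / q = 1 + 1 / r) :
    eLpNorm (g ⋆ₗ[μ] φ) (.ofReal r) μ ≤ eLpNorm g (.ofReal p) μ * eLpNorm φ (.ofReal q) μ := by
  rw [eLpNorm_ofReal_eq_lintegral _ hr, eLpNorm_ofReal_eq_lintegral _ (by linarith),
    eLpNorm_ofReal_eq_lintegral _ (by linarith)]
  calc (∫⁻ x, (g ⋆ₗ[μ] φ) x ^ r ∂μ) ^ (1 / r)
      ≤ ((∫⁻ x, g x ^ p ∂μ) ^ (r / p) * (∫⁻ x, φ x ^ q ∂μ) ^ (r / q)) ^ (1 / r) :=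
        ENNReal.rpow_le_rpow (lintegral_lconvolution_rpow_le hg hφ hp hq hr hpqr) (by positivity)
    _ = _ := by
        rw [ENNReal.mul_rpow_of_nonneg _ _ (by positivity), ← ENNReal.rpow_mul, ← ENNReal.rpow_mul]
        congr 2 <;> field_simp

theorem eLpNorm_mul_lconvolution_lt {g w φ : G → ℝ≥0∞} (hg : AEMeasurable g μ)
    (hφ : AEMeasurable φ μ) (hp : 1 ≤ p) (hq : 1 ≤ q) (hr : 0 < r)
    (hpqr : 1 / p + 1 / q = 1 + 1 / r) (hgp : eLpNorm g (.ofReal p) μ ≠ ⊤)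
    (hφq : eLpNorm φ (.ofReal q) μ ≠ ⊤) (hg0 : ¬g =ᵐ[μ] 0) (hφ0 : ∀ᵐ x ∂μ, φ x ≠ 0)
    (hw1 : ∀ᵐ y ∂μ, w y < 1) :
    eLpNorm ((w * g) ⋆ₗ[μ] φ) (.ofReal r) μ < eLpNorm (g ⋆ₗ[μ] φ) (.ofReal r) μ := by
  have : (ae μ).NeBot := ae_neBot.2 fun hμ => hg0 (by rw [hμ, ae_zero]; exact eventually_bot)
  have hwg : ∀ᵐ y ∂μ, (w * g) y ≤ g y := hw1.mono fun y hy => mul_le_of_le_one_left' hy.le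
  have hle : ∀ x, ((w * g) ⋆ₗ[μ] φ) x ≤ (g ⋆ₗ[μ] φ) x := fun x =>
    lintegral_mono_ae (hwg.mono fun y hy => mul_le_mul_left hy _)
  have hconv_fin : eLpNorm (g ⋆ₗ[μ] φ) (.ofReal r) μ ≠ ⊤ :=
    ne_top_of_le_ne_top (ENNReal.mul_ne_top hgp hφq) (eLpNorm_lconvolution_le hg hφ hp hq hr hpqr)
  have hg_fin := ae_lt_top_of_eLpNorm_ofReal_ne_top hg (by linarith) hgp
  have hφ_fin := ae_lt_top_of_eLpNorm_ofReal_ne_top hφ (by linarith) hφq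
  -- pointwise strict inequality wherever `g ⋆ φ` is finite
  have hlt : ∀ᵐ x ∂μ, ((w * g) ⋆ₗ[μ] φ) x < (g ⋆ₗ[μ] φ) x := by
    filter_upwards [ae_lt_top_of_eLpNorm_ofReal_ne_top (aemeasurable_lconvolution hg hφ) hr
      hconv_fin] with x hx
    have hφx : ∀ᵐ y ∂μ, φ (-y + x) ≠ 0 ∧ φ (-y + x) < ⊤ :=
      (by fun_prop : Measure.QuasiMeasurePreserving (fun y => -y + x) μ μ).ae (hφ0.and hφ_fin)
    have hgx : ∃ᵐ y ∂μ, g y ≠ 0 := by simpa [EventuallyEq, Filter.not_eventually] using hg0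
    simp only [lconvolution_def] at hx ⊢
    refine lintegral_strict_mono_of_ae_le_of_frequently_ae_lt (by fun_prop)
      (ne_top_of_le_ne_top hx.ne (hle x)) ?_ ?_
    · exact hwg.mono fun y hy => mul_le_mul_left hy _
    · refine (hgx.and_eventually ((hφx.and hg_fin).and hw1)).mono ?_
      rintro y ⟨hgy, ⟨⟨hφy0, hφyt⟩, hgyt⟩, hwy⟩
      refine (ENNReal.mul_lt_mul_left hφy0 hφyt.ne ?_).ne
      simpa using ENNReal.mul_lt_mul_left hgy hgyt.ne hwy
  simp only [eLpNorm_ofReal_eq_lintegral _ hr] at hconv_fin ⊢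
  rw [Ne, ENNReal.rpow_eq_top_iff_of_pos (by positivity)] at hconv_fin
  refine ENNReal.rpow_lt_rpow (lintegral_strict_mono_of_ae_le_of_frequently_ae_lt
    ((aemeasurable_lconvolution hg hφ).pow_const r) ?_
    (ae_of_all _ fun x => ENNReal.rpow_le_rpow (hle x) hr.le)
    (hlt.mono fun x hx => (ENNReal.rpow_lt_rpow hx hr).ne).frequently) (by positivity)
  exact ne_top_of_le_ne_top hconv_fin (lintegral_mono fun x => ENNReal.rpow_le_rpow (hle x) hr.le)

end Young

section KernelConv

variable {G : Type*} [MeasurableSpace G] [AddCommGroup G] {μ : Measure G}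
  {k : G → ℝ} {g h : G → ℂ} {p q r : ℝ}

noncomputable def kernelConv (μ : Measure G) (k : G → ℝ) (g : G → ℂ) (x : G) : ℂ :=
  ∫ y, (k (x - y) : ℂ) * g y ∂μ

theorem lintegral_enorm_kernelConv_integrand (x : G) :
    ∫⁻ y, ‖(k (x - y) : ℂ) * g y‖ₑ ∂μ = ((fun y => ‖g y‖ₑ) ⋆ₗ[μ] fun y => ‖k y‖ₑ) x := by
  rw [lconvolution_def]
  congr 1 with y
  rw [enorm_mul, mul_comm, neg_add_eq_sub]
  simp [enorm_eq_nnnorm]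

theorem enorm_kernelConv_le (x : G) :
    ‖kernelConv μ k g x‖ₑ ≤ ((fun y => ‖g y‖ₑ) ⋆ₗ[μ] fun y => ‖k y‖ₑ) x :=
  (enorm_integral_le_lintegral_enorm _).trans_eq (lintegral_enorm_kernelConv_integrand x)

variable [MeasurableAdd₂ G] [μ.IsAddLeftInvariant]

theorem kernelConv_comp_sub_right (t : G) :
    kernelConv μ k (fun y => g (y - t)) = fun x => kernelConv μ k g (x - t) := by
  funext x
  simp only [kernelConv]
  rw [← integral_add_right_eq_self _ t]
  simp only [add_sub_cancel_right, sub_add_eq_sub_sub_swap]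

theorem enorm_kernelConv_norm_of_nonneg [MeasurableNeg G] [μ.IsNegInvariant] (hk : 0 ≤ᵐ[μ] k)
    {x : G} (hx : Integrable (fun y => (k (x - y) : ℂ) * ‖g y‖) μ) :
    ‖kernelConv μ k (fun y => ‖g y‖) x‖ₑ = ((fun y => ‖g y‖ₑ) ⋆ₗ[μ] fun y => ‖k y‖ₑ) x := by
  have hkx : ∀ᵐ y ∂μ, 0 ≤ k (x - y) :=
    (Measure.measurePreserving_sub_left μ x).quasiMeasurePreserving.ae hk
  have hkg : 0 ≤ᵐ[μ] fun y => k (x - y) * ‖g y‖ := hkx.mono fun y hy => by positivity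
  have hreal : Integrable (fun y => k (x - y) * ‖g y‖) μ := by simpa using hx.re
  have hofReal : kernelConv μ k (fun y => ‖g y‖) x = ((∫ y, k (x - y) * ‖g y‖ ∂μ : ℝ) : ℂ) := by
    rw [kernelConv, ← integral_complex_ofReal]
    push_cast
    rfl
  rw [hofReal, lconvolution_def, ← ofReal_norm, Complex.norm_real,
    Real.norm_of_nonneg (integral_nonneg_of_ae hkg), ofReal_integral_eq_lintegral_ofReal hreal hkg]
  refine lintegral_congr_ae ?_
  filter_upwards [hkx] with y hy
  rw [ENNReal.ofReal_mul hy, ← Real.enorm_eq_ofReal hy, ofReal_norm, mul_comm, neg_add_eq_sub]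

variable [MeasurableNeg G] [SFinite μ]

theorem aestronglyMeasurable_kernelConv_integrand (hk : AEStronglyMeasurable k μ)
    (hg : AEStronglyMeasurable g μ) (x : G) :
    AEStronglyMeasurable (fun y => (k (x - y) : ℂ) * g y) μ :=
  hg.convolution_integrand_snd (ContinuousLinearMap.mul ℂ ℂ).flip
    (Complex.continuous_ofReal.comp_aestronglyMeasurable hk) x

theorem aestronglyMeasurable_kernelConv (hk : AEStronglyMeasurable k μ)
    (hg : AEStronglyMeasurable g μ) : AEStronglyMeasurable (kernelConv μ k g) μ :=
  (hg.convolution_integrand (ContinuousLinearMap.mul ℂ ℂ).flip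
    (Complex.continuous_ofReal.comp_aestronglyMeasurable hk)).integral_prod_right'

theorem eLpNorm_kernelConv_comp_sub_right (hk : AEStronglyMeasurable k μ)
    (hg : AEStronglyMeasurable g μ) (t : G) (s : ℝ≥0∞) :
    eLpNorm (kernelConv μ k (fun y => g (y - t))) s μ = eLpNorm (kernelConv μ k g) s μ := by
  rw [kernelConv_comp_sub_right]
  exact eLpNorm_comp_measurePreserving (aestronglyMeasurable_kernelConv hk hg)
    (measurePreserving_sub_right μ t)

variable [μ.IsNegInvariant]

theorem eLpNorm_kernelConv_le (hk : AEStronglyMeasurable k μ) (hg : AEStronglyMeasurable g μ)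
    (hp : 1 ≤ p) (hq : 1 ≤ q) (hr : 0 < r) (hpqr : 1 / p + 1 / q = 1 + 1 / r) :
    eLpNorm (kernelConv μ k g) (.ofReal r) μ ≤
      eLpNorm g (.ofReal p) μ * eLpNorm k (.ofReal q) μ := by
  calc eLpNorm (kernelConv μ k g) (.ofReal r) μ
      ≤ eLpNorm ((fun y => ‖g y‖ₑ) ⋆ₗ[μ] fun y => ‖k y‖ₑ) (.ofReal r) μ :=
        eLpNorm_mono_enorm fun x => (enorm_kernelConv_le x).trans_eq (enorm_eq_self _).symm
    _ ≤ _ := by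
        simpa only [eLpNorm_enorm] using
          eLpNorm_lconvolution_le hg.enorm hk.enorm hp hq hr hpqr

theorem ae_integrable_kernelConv_integrand (hk : MemLp k (.ofReal q) μ)
    (hg : MemLp g (.ofReal p) μ) (hp : 1 ≤ p) (hq : 1 ≤ q) (hr : 0 < r)
    (hpqr : 1 / p + 1 / q = 1 + 1 / r) :
    ∀ᵐ x ∂μ, Integrable (fun y => (k (x - y) : ℂ) * g y) μ := by
  have hfin : eLpNorm ((fun y => ‖g y‖ₑ) ⋆ₗ[μ] fun y => ‖k y‖ₑ) (.ofReal r) μ ≠ ⊤ := by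
    refine ne_top_of_le_ne_top (ENNReal.mul_ne_top hg.2.ne hk.2.ne) ?_
    simpa only [eLpNorm_enorm] using
      eLpNorm_lconvolution_le hg.1.enorm hk.1.enorm hp hq hr hpqr
  filter_upwards [ae_lt_top_of_eLpNorm_ofReal_ne_top
    (aemeasurable_lconvolution hg.1.enorm hk.1.enorm) hr hfin] with x hx
  exact ⟨aestronglyMeasurable_kernelConv_integrand hk.1 hg.1 x,
    (lintegral_enorm_kernelConv_integrand x).trans_lt hx⟩

theorem eLpNorm_kernelConv_add_le (hk : MemLp k (.ofReal q) μ) (hg : MemLp g (.ofReal p) μ)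
    (hh : MemLp h (.ofReal p) μ) (hp : 1 ≤ p) (hq : 1 ≤ q) (hr : 1 ≤ r)
    (hpqr : 1 / p + 1 / q = 1 + 1 / r) :
    eLpNorm (kernelConv μ k (g + h)) (.ofReal r) μ ≤
      eLpNorm (kernelConv μ k g) (.ofReal r) μ + eLpNorm (kernelConv μ k h) (.ofReal r) μ := by
  have hadd : kernelConv μ k (g + h) =ᵐ[μ] kernelConv μ k g + kernelConv μ k h := by
    filter_upwards [ae_integrable_kernelConv_integrand hk hg hp hq (by linarith) hpqr,
      ae_integrable_kernelConv_integrand hk hh hp hq (by linarith) hpqr] with x hgx hhx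
    simp only [kernelConv, Pi.add_apply, mul_add]
    exact integral_add hgx hhx
  rw [eLpNorm_congr_ae hadd]
  exact eLpNorm_add_le (aestronglyMeasurable_kernelConv hk.1 hg.1)
    (aestronglyMeasurable_kernelConv hk.1 hh.1) (by simpa using hr)

theorem eLpNorm_kernelConv_le_translate_add (hk : MemLp k (.ofReal q) μ)
    (hg : MemLp g (.ofReal p) μ) {u : G → ℝ} (hu : Measurable u) (hu01 : ∀ y, u y ∈ Set.Icc 0 1)
    (t : G) (hp : 1 ≤ p) (hq : 1 ≤ q) (hr : 1 ≤ r) (hpqr : 1 / p + 1 / q = 1 + 1 / r) :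
    eLpNorm (kernelConv μ k g) (.ofReal r) μ ≤
      eLpNorm (kernelConv μ k (fun y => u y * g (y - t))) (.ofReal r) μ +
        eLpNorm (fun y => (1 - u (y + t)) • g y) (.ofReal p) μ * eLpNorm k (.ofReal q) μ := by
  have hut : Measurable fun y => u (y + t) := hu.comp (measurable_add_const t)
  have hmain : MemLp (fun y => (u (y + t) : ℂ) * g y) (.ofReal p) μ := by
    refine hg.of_le ((Complex.measurable_ofReal.comp hut).aestronglyMeasurable.mul hg.1)
      (ae_of_all _ fun y => ?_)
    rw [norm_mul, Complex.norm_real, Real.norm_of_nonneg (hu01 _).1]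
    exact mul_le_of_le_one_left (norm_nonneg _) (hu01 _).2
  have hrest : MemLp (fun y => (1 - u (y + t)) • g y) (.ofReal p) μ := by
    refine hg.of_le ((measurable_const.sub hut).aestronglyMeasurable.smul hg.1)
      (ae_of_all _ fun y => ?_)
    rw [norm_smul, Real.norm_of_nonneg (sub_nonneg.2 (hu01 _).2)]
    exact mul_le_of_le_one_left (norm_nonneg _) (by linarith [(hu01 (y + t)).1])
  have hsum : (fun y => (u (y + t) : ℂ) * g y) + (fun y => (1 - u (y + t)) • g y) = g := by
    funext y
    simp only [Pi.add_apply, Complex.real_smul]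
    push_cast
    ring
  have hshift : eLpNorm (kernelConv μ k (fun y => (u (y + t) : ℂ) * g y)) (.ofReal r) μ =
      eLpNorm (kernelConv μ k (fun y => u y * g (y - t))) (.ofReal r) μ := by
    rw [← eLpNorm_kernelConv_comp_sub_right hk.1 hmain.1 t]
    simp only [sub_add_cancel]
  calc eLpNorm (kernelConv μ k g) (.ofReal r) μ
      ≤ eLpNorm (kernelConv μ k (fun y => (u (y + t) : ℂ) * g y)) (.ofReal r) μ +
          eLpNorm (kernelConv μ k (fun y => (1 - u (y + t)) • g y)) (.ofReal r) μ := by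
        conv_lhs => rw [← hsum]
        exact eLpNorm_kernelConv_add_le hk hmain hrest hp hq hr hpqr
    _ ≤ _ := by
        rw [hshift]
        gcongr
        exact eLpNorm_kernelConv_le hk.1 hrest.1 hp hq (by linarith) hpqr

theorem eLpNorm_kernelConv_norm_of_nonneg (hk : MemLp k (.ofReal q) μ) (hk0 : 0 ≤ᵐ[μ] k)
    (hg : MemLp g (.ofReal p) μ) (hp : 1 ≤ p) (hq : 1 ≤ q) (hr : 0 < r)
    (hpqr : 1 / p + 1 / q = 1 + 1 / r) :
    eLpNorm (kernelConv μ k (fun y => ‖g y‖)) (.ofReal r) μ =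
      eLpNorm ((fun y => ‖g y‖ₑ) ⋆ₗ[μ] fun y => ‖k y‖ₑ) (.ofReal r) μ := by
  refine eLpNorm_congr_enorm_ae ?_
  filter_upwards [ae_integrable_kernelConv_integrand hk hg.norm.ofReal hp hq hr hpqr] with x hx
  rw [enorm_kernelConv_norm_of_nonneg hk0 hx, enorm_eq_self]

theorem eLpNorm_kernelConv_mul_lt (hk : MemLp k (.ofReal q) μ) (hkpos : ∀ᵐ x ∂μ, 0 < k x)
    (hg : MemLp g (.ofReal p) μ) (hg0 : ¬g =ᵐ[μ] 0) {u : G → ℝ} (hu : ∀ᵐ y ∂μ, |u y| < 1)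
    (hp : 1 ≤ p) (hq : 1 ≤ q) (hr : 0 < r) (hpqr : 1 / p + 1 / q = 1 + 1 / r) :
    eLpNorm (kernelConv μ k (fun y => u y * g y)) (.ofReal r) μ <
      eLpNorm (kernelConv μ k (fun y => ‖g y‖)) (.ofReal r) μ := by
  calc eLpNorm (kernelConv μ k (fun y => u y * g y)) (.ofReal r) μ
      ≤ eLpNorm (((fun y => ‖u y‖ₑ) * fun y => ‖g y‖ₑ) ⋆ₗ[μ] fun y => ‖k y‖ₑ) (.ofReal r) μ := by
        refine eLpNorm_mono_enorm fun x => (enorm_kernelConv_le x).trans_eq ?_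
        simp [enorm_eq_nnnorm, Pi.mul_def]
    _ < eLpNorm ((fun y => ‖g y‖ₑ) ⋆ₗ[μ] fun y => ‖k y‖ₑ) (.ofReal r) μ := by
        refine eLpNorm_mul_lconvolution_lt hg.1.enorm hk.1.enorm hp hq hr hpqr
          (by rw [eLpNorm_enorm]; exact hg.2.ne) (by rw [eLpNorm_enorm]; exact hk.2.ne)
          (fun h0 => hg0 (h0.mono fun y hy => enorm_eq_zero.1 hy))
          (hkpos.mono fun x hx => enorm_ne_zero.2 hx.ne') ?_
        filter_upwards [hu] with y hy
        rw [Real.enorm_eq_ofReal_abs]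
        exact ENNReal.ofReal_lt_one.2 hy
    _ = _ := (eLpNorm_kernelConv_norm_of_nonneg hk (hkpos.mono fun x hx => hx.le) hg
        hp hq hr hpqr).symm

theorem eLpNorm_kernelConv_mul_lt_lpOpNorm (hk : MemLp k (.ofReal q) μ)
    (hkpos : ∀ᵐ x ∂μ, 0 < k x) {u : G → ℝ} (hu : ∀ᵐ y ∂μ, |u y| < 1) (hg : MemLp g (.ofReal p) μ)
    (hg1 : eLpNorm g (.ofReal p) μ = 1) (hp : 1 ≤ p) (hq : 1 ≤ q) (hr : 0 < r)
    (hpqr : 1 / p + 1 / q = 1 + 1 / r) :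
    eLpNorm (kernelConv μ k (fun y => u y * g y)) (.ofReal r) μ <
      lpOpNorm μ (.ofReal p) (.ofReal r) (kernelConv μ k) :=
  (eLpNorm_kernelConv_mul_lt hk hkpos hg (fun h0 => by simp [eLpNorm_congr_ae h0] at hg1) hu
    hp hq hr hpqr).trans_le <| eLpNorm_le_lpOpNorm hg.norm.ofReal <|
      (eLpNorm_congr_norm_ae (ae_of_all _ fun y => by simp)).trans hg1

end KernelConv

theorem eLpNorm_kernelConv_le_iSup_translate {k : ℝ → ℝ} {f : ℝ → ℂ} {u : ℝ → ℝ} {p q r : ℝ}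
    (hk : MemLp k (.ofReal q) volume) (hf : MemLp f (.ofReal p) volume) (hu : Measurable u)
    (hu01 : ∀ y, u y ∈ Set.Icc 0 1) (hu1 : Tendsto u atTop (𝓝 1)) (hp : 1 ≤ p) (hq : 1 ≤ q)
    (hr : 1 ≤ r) (hpqr : 1 / p + 1 / q = 1 + 1 / r) :
    eLpNorm (kernelConv volume k f) (.ofReal r) volume ≤
      ⨆ t, eLpNorm (kernelConv volume k (fun y => u y * f (y - t))) (.ofReal r) volume := by
  have hsmall : Tendsto (fun t => eLpNorm (fun y => (1 - u (y + t)) • f y) (.ofReal p) volume)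
      atTop (𝓝 0) :=
    tendsto_eLpNorm_smul_nhds_zero ENNReal.ofReal_ne_top hf
      (fun t => (measurable_const.sub (hu.comp (measurable_add_const t))).aestronglyMeasurable)
      (fun t y => by
        rw [Real.norm_of_nonneg (sub_nonneg.2 (hu01 _).2)]
        linarith [(hu01 (y + t)).1])
      (fun y => by
        simpa using (hu1.comp (tendsto_atTop_add_const_left atTop y tendsto_id)).const_sub 1)
  have hlim := (tendsto_const_nhds (x := ⨆ t, eLpNorm (kernelConv volume k
    (fun y => u y * f (y - t))) (.ofReal r) volume)).add
      (ENNReal.Tendsto.mul_const hsmall (Or.inr hk.2.ne))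
  rw [zero_mul, add_zero] at hlim
  exact ge_of_tendsto' hlim fun t =>
    (eLpNorm_kernelConv_le_translate_add hk hf hu hu01 t hp hq hr hpqr).trans
      (add_le_add (le_iSup (fun t => eLpNorm (kernelConv volume k
        (fun y => u y * f (y - t))) (.ofReal r) volume) t) le_rfl)

theorem lpOpNorm_kernelConv_le_lpOpNorm_mul {k u : ℝ → ℝ} {p q r : ℝ}
    (hk : MemLp k (.ofReal q) volume) (hu : Measurable u) (hu01 : ∀ y, u y ∈ Set.Icc 0 1)
    (hu1 : Tendsto u atTop (𝓝 1)) (hp : 1 ≤ p) (hq : 1 ≤ q) (hr : 1 ≤ r)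
    (hpqr : 1 / p + 1 / q = 1 + 1 / r) :
    lpOpNorm volume (.ofReal p) (.ofReal r) (kernelConv volume k) ≤
      lpOpNorm volume (.ofReal p) (.ofReal r) fun f => kernelConv volume k fun y => u y * f y :=
  iSup₂_le fun _ ⟨hf, hf1⟩ =>
    (eLpNorm_kernelConv_le_iSup_translate hk hf hu hu01 hu1 hp hq hr hpqr).trans <|
      iSup_le fun t => eLpNorm_le_lpOpNorm
        (hf.comp_measurePreserving (measurePreserving_sub_right volume t))
        ((eLpNorm_comp_measurePreserving hf.1 (measurePreserving_sub_right volume t)).trans hf1)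

theorem stmt15_general (p q r r' : ℝ) (hp : 1 < p) (hq : 1 < q) (hr : 1 < r)
    (hpqr : 1/p + 1/q + 1/r = 2) (hr' : 1/r + 1/r' = 1)
    (k : ℝ → ℝ) (hkpos : ∀ x, 0 < k x) (hk : MemLp k (ENNReal.ofReal q) volume)
    (u : ℝ → ℝ) (hu : Monotone u) (hu01 : ∀ y, 0 < u y ∧ u y < 1)
    (hu1 : Tendsto u atTop (nhds 1)) :
    (⨆ (f : ℝ → ℂ) (_ : MemLp f (ENNReal.ofReal p) volume ∧
        eLpNorm f (ENNReal.ofReal p) volume = 1),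
      eLpNorm (fun x => ∫ y, ((k (x - y) * u y : ℝ) : ℂ) * f y)
        (ENNReal.ofReal r') volume)
    = (⨆ (f : ℝ → ℂ) (_ : MemLp f (ENNReal.ofReal p) volume ∧
        eLpNorm f (ENNReal.ofReal p) volume = 1),
      eLpNorm (fun x => ∫ y, ((k (x - y) : ℝ) : ℂ) * f y)
        (ENNReal.ofReal r') volume) ∧
    ∀ f : ℝ → ℂ, MemLp f (ENNReal.ofReal p) volume →
      eLpNorm f (ENNReal.ofReal p) volume = 1 →
      eLpNorm (fun x => ∫ y, ((k (x - y) * u y : ℝ) : ℂ) * f y)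
          (ENNReal.ofReal r') volume <
        ⨆ (g : ℝ → ℂ) (_ : MemLp g (ENNReal.ofReal p) volume ∧
            eLpNorm g (ENNReal.ofReal p) volume = 1),
          eLpNorm (fun x => ∫ y, ((k (x - y) * u y : ℝ) : ℂ) * g y)
            (ENNReal.ofReal r') volume := by
  have hr'1 : 1 ≤ r' := by
    have hr'_pos : 0 < 1 / r' := by linarith [(div_lt_one (by linarith : (0:ℝ) < r)).2 hr]
    have : 1 / r' ≤ 1 := by linarith [one_div_pos.2 (by linarith : (0:ℝ) < r)]
    rwa [div_le_one (one_div_pos.1 hr'_pos)] at this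
  have hexp : 1 / p + 1 / q = 1 + 1 / r' := by linarith
  have hweighted : ∀ (f : ℝ → ℂ) x, ∫ y, ((k (x - y) * u y : ℝ) : ℂ) * f y =
      kernelConv volume k (fun y => u y * f y) x := fun f x => by
    simp only [kernelConv, Complex.ofReal_mul, mul_assoc]
  simp only [hweighted]
  have hlt : ∀ f : ℝ → ℂ, MemLp f (.ofReal p) volume → eLpNorm f (.ofReal p) volume = 1 →
      eLpNorm (kernelConv volume k (fun y => u y * f y)) (.ofReal r') volume <
        lpOpNorm volume (.ofReal p) (.ofReal r') (kernelConv volume k) := fun f hf hf1 =>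
    eLpNorm_kernelConv_mul_lt_lpOpNorm hk (ae_of_all _ hkpos)
      (ae_of_all _ fun y => abs_lt.2 ⟨by linarith [hu01 y], (hu01 y).2⟩) hf hf1
      hp.le hq.le (by linarith) hexp
  have heq : lpOpNorm volume (.ofReal p) (.ofReal r')
      (fun f => kernelConv volume k fun y => u y * f y) =
        lpOpNorm volume (.ofReal p) (.ofReal r') (kernelConv volume k) :=
    le_antisymm (iSup₂_le fun f hf => (hlt f hf.1 hf.2).le)
      (lpOpNorm_kernelConv_le_lpOpNorm_mul hk hu.measurable
        (fun y => ⟨(hu01 y).1.le, (hu01 y).2.le⟩) hu1 hp.le hq.le hr'1 hexp)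
  exact ⟨heq, fun f hf hf1 => (hlt f hf hf1).trans_eq heq.symm⟩

theorem stmt15 (p q r r' : ℝ) (hp : 1 < p) (hq : 1 < q) (hr : 1 < r)
    (hpqr : 1/p + 1/q + 1/r = 2) (hr' : 1/r + 1/r' = 1)
    (k : ℝ → ℝ) (hkpos : ∀ x, 0 < k x) (hk : MemLp k (ENNReal.ofReal q) volume)
    (u : ℝ → ℝ) (hu : Monotone u) (hu01 : ∀ y, 0 < u y ∧ u y < 1)
    (hu0 : Tendsto u atBot (nhds 0)) (hu1 : Tendsto u atTop (nhds 1)) :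
    (⨆ (f : ℝ → ℂ) (_ : MemLp f (ENNReal.ofReal p) volume ∧
        eLpNorm f (ENNReal.ofReal p) volume = 1),
      eLpNorm (fun x => ∫ y, ((k (x - y) * u y : ℝ) : ℂ) * f y)
        (ENNReal.ofReal r') volume)
    = (⨆ (f : ℝ → ℂ) (_ : MemLp f (ENNReal.ofReal p) volume ∧
        eLpNorm f (ENNReal.ofReal p) volume = 1),
      eLpNorm (fun x => ∫ y, ((k (x - y) : ℝ) : ℂ) * f y)
        (ENNReal.ofReal r') volume) ∧
    ∀ f : ℝ → ℂ, MemLp f (ENNReal.ofReal p) volume →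
      eLpNorm f (ENNReal.ofReal p) volume = 1 →
      eLpNorm (fun x => ∫ y, ((k (x - y) * u y : ℝ) : ℂ) * f y)
          (ENNReal.ofReal r') volume <
        ⨆ (g : ℝ → ℂ) (_ : MemLp g (ENNReal.ofReal p) volume ∧
            eLpNorm g (ENNReal.ofReal p) volume = 1),
          eLpNorm (fun x => ∫ y, ((k (x - y) * u y : ℝ) : ℂ) * g y)
            (ENNReal.ofReal r') volume :=
  stmt15_general p q r r' hp hq hr hpqr hr' k hkpos hk u hu hu01 hu1
end
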